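/- Suppose F : [0,∞) → [0,∞) is continuous, α(t) = ∫₀^{F(t)} 1/(1+√s) ds is differentiable with α'(t) ≤ C·F(t) for all t ≥ 0, and ∫₀^∞ F(s) ds ≤ K < ∞. Then F(t) ≤ max(2(α(0) + CK), 4(α(0) + CK)²) for all t ≥ 0; in particular F is uniformly bounded. -/

import Mathlib

/-!
Integrating `α' ≤ C F` gives `α t ≤ α 0 + C ∫₀^∞ F ≤ α 0 + C K`. Since `1 / (1 + √s)` is at least
`1/2` on `[0, 1]` and at least `1 / (2 √x)` on `[0, x]` for `x ≥ 1`, the primitive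
`x ↦ ∫₀^x 1 / (1 + √s) ds` dominates `x / 2` for `x ≤ 1` and `√x / 2` for `x ≥ 1`; inverting
these two bounds at `x = F t` gives the claim.
-/

open MeasureTheory Set

lemma intervalIntegral_le_setIntegral_Ici {f : ℝ → ℝ} {a b : ℝ} (hab : a ≤ b)
    (hf : IntegrableOn f (Ici a)) (hf_nonneg : ∀ x, a ≤ x → 0 ≤ f x) :
    ∫ x in a..b, f x ≤ ∫ x in Ici a, f x := by
  rw [intervalIntegral.integral_of_le hab]
  refine setIntegral_mono_set hf ?_ (Filter.Eventually.of_forall fun x hx => le_of_lt hx.1)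
  filter_upwards [ae_restrict_mem measurableSet_Ici] with x hx using hf_nonneg x hx

lemma continuous_one_div_one_add_sqrt : Continuous fun s : ℝ => 1 / (1 + √s) :=
  continuous_const.div (continuous_const.add Real.continuous_sqrt) fun s => by positivity

lemma mul_le_integral_one_div_one_add_sqrt {x c : ℝ} (hx : 0 ≤ x)
    (hc : ∀ s ∈ Icc 0 x, c ≤ 1 / (1 + √s)) :
    x * c ≤ ∫ s in (0:ℝ)..x, 1 / (1 + √s) := by
  have h := intervalIntegral.integral_mono_on hx (intervalIntegrable_const (μ := volume))
    (continuous_one_div_one_add_sqrt.intervalIntegrable 0 x) hc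
  rwa [intervalIntegral.integral_const, smul_eq_mul, sub_zero] at h

lemma half_le_integral_one_div_one_add_sqrt {x : ℝ} (hx₀ : 0 ≤ x) (hx₁ : x ≤ 1) :
    x / 2 ≤ ∫ s in (0:ℝ)..x, 1 / (1 + √s) := by
  refine (div_eq_mul_one_div x 2).trans_le (mul_le_integral_one_div_one_add_sqrt hx₀ ?_)
  intro s hs
  have : √s ≤ 1 := Real.sqrt_le_one.2 (hs.2.trans hx₁)
  gcongr
  linarith

lemma sqrt_div_two_le_integral_one_div_one_add_sqrt {x : ℝ} (hx : 1 ≤ x) :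
    √x / 2 ≤ ∫ s in (0:ℝ)..x, 1 / (1 + √s) := by
  have hsqrt : 1 ≤ √x := Real.one_le_sqrt.2 hx
  have hx₀ : 0 ≤ x := zero_le_one.trans hx
  calc √x / 2 = x * (1 / (2 * √x)) := by
        field_simp
        exact Real.sq_sqrt hx₀
    _ ≤ ∫ s in (0:ℝ)..x, 1 / (1 + √s) := by
        refine mul_le_integral_one_div_one_add_sqrt hx₀ fun s hs => ?_
        have : √s ≤ √x := Real.sqrt_le_sqrt hs.2
        gcongr
        linarith

lemma le_max_of_integral_one_div_one_add_sqrt_le {x A : ℝ} (hx : 0 ≤ x)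
    (h : ∫ s in (0:ℝ)..x, 1 / (1 + √s) ≤ A) :
    x ≤ max (2 * A) (4 * A ^ 2) := by
  rcases le_or_gt x 1 with hx₁ | hx₁
  · have := half_le_integral_one_div_one_add_sqrt hx hx₁
    exact le_max_of_le_left (by linarith)
  · have hsqrt : √x ≤ 2 * A := by
      linarith [sqrt_div_two_le_integral_one_div_one_add_sqrt hx₁.le]
    refine le_max_of_le_right ?_
    calc x = √x ^ 2 := (Real.sq_sqrt hx).symm
      _ ≤ (2 * A) ^ 2 := by gcongr
      _ = 4 * A ^ 2 := by ring

theorem F_uniformly_bounded_general (F α : ℝ → ℝ) (C K : ℝ)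
    (hC : 0 ≤ C)
    (hFnonneg : ∀ t, 0 ≤ t → 0 ≤ F t)
    (hα : ∀ t, α t = ∫ s in (0:ℝ)..(F t), 1 / (1 + Real.sqrt s))
    (hαdiff : ∀ t, 0 ≤ t → DifferentiableAt ℝ α t)
    (hαderiv : ∀ t, 0 ≤ t → deriv α t ≤ C * F t)
    (hFint : MeasureTheory.IntegrableOn F (Set.Ici 0))
    (hFtotal : ∫ s in Set.Ici (0:ℝ), F s ≤ K) :
    ∀ t, 0 ≤ t → F t ≤ max (2 * (α 0 + C * K)) (4 * (α 0 + C * K) ^ 2) := by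
  intro t ht
  have hgrowth : α t - α 0 ≤ ∫ s in (0:ℝ)..t, C * F s :=
    intervalIntegral.sub_le_integral_of_hasDeriv_right_of_le_Ico ht
      (fun x hx => (hαdiff x hx.1).continuousAt.continuousWithinAt)
      (fun x hx => (hαdiff x hx.1).hasDerivAt.hasDerivWithinAt)
      ((hFint.mono_set Icc_subset_Ici_self).const_mul C) (fun x hx => hαderiv x hx.1)
  have hmass : ∫ s in (0:ℝ)..t, F s ≤ K :=
    (intervalIntegral_le_setIntegral_Ici ht hFint hFnonneg).trans hFtotal
  rw [intervalIntegral.integral_const_mul] at hgrowth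
  have hαt : α t ≤ α 0 + C * K := by nlinarith [mul_le_mul_of_nonneg_left hmass hC]
  exact le_max_of_integral_one_div_one_add_sqrt_le (hFnonneg t ht) (hα t ▸ hαt)

theorem F_uniformly_bounded (F α : ℝ → ℝ) (C K : ℝ)
    (hC : 0 ≤ C) (hK : 0 ≤ K)
    (hFcont : Continuous F) (hFnonneg : ∀ t, 0 ≤ t → 0 ≤ F t)
    (hα : ∀ t, α t = ∫ s in (0:ℝ)..(F t), 1 / (1 + Real.sqrt s))
    (hαdiff : ∀ t, 0 ≤ t → DifferentiableAt ℝ α t)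
    (hαderiv : ∀ t, 0 ≤ t → deriv α t ≤ C * F t)
    (hFint : MeasureTheory.IntegrableOn F (Set.Ici 0))
    (hFtotal : ∫ s in Set.Ici (0:ℝ), F s ≤ K) :
    ∀ t, 0 ≤ t → F t ≤ max (2 * (α 0 + C * K)) (4 * (α 0 + C * K) ^ 2) :=
  F_uniformly_bounded_general F α C K hC hFnonneg hα hαdiff hαderiv hFint hFtotal
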